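/- Let 2 < p < 10/3 and define H̃(v) = (1/p)|f(v)|^p + (1/12)|f(v)|^12 − (2/3)|v|^6 and h̃(v) = |f(v)|^(p−2) f(v) f'(v) + |f(v)|^10 f(v) f'(v) − 4|v|^4 v for v ∈ ℝ. Then for every ε > 0 there exists C_ε > 0 such that |h̃(s)| ≤ 2ε|s| + 6C_ε|s|^5 and |H̃(s)| ≤ ε s² + C_ε|s|^6 for all s ∈ ℝ; moreover, for every ε > 0 there exists C'_ε > 0 such that |H̃(w + u) − H̃(w) − H̃(u)| ≤ ε(|w|² + |w|^6) + C'_ε(|u|² + |u|^6) for all w, u ∈ ℝ. -/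

import Mathlib

open MeasureTheory

/-- `g(s) = ∫_0^s √(1 + 2τ²) dτ`, the inverse of the dual function `f`. -/
noncomputable def g (s : ℝ) : ℝ := ∫ τ in (0:ℝ)..s, Real.sqrt (1 + 2 * τ ^ 2)

/-- The dual function `f = g⁻¹`. -/
noncomputable def f : ℝ → ℝ := Function.invFun g

/-- `H̃(v) = (1/p)|f(v)|^p + (1/12)|f(v)|^12 − (2/3)|v|^6`. -/
noncomputable def Htilde (p v : ℝ) : ℝ :=
  (1 / p) * |f v| ^ p + (1 / 12) * |f v| ^ (12:ℕ) - (2 / 3) * |v| ^ (6:ℕ)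

/-- `h̃(v) = |f(v)|^(p−2) f(v) f'(v) + |f(v)|^10 f(v) f'(v) − 4|v|^4 v`. -/
noncomputable def htilde (p v : ℝ) : ℝ :=
  |f v| ^ (p - 2) * f v * deriv f v + |f v| ^ (10:ℕ) * f v * deriv f v
    - 4 * |v| ^ (4:ℕ) * v

lemma cont_integrand : Continuous (fun τ : ℝ => Real.sqrt (1 + 2 * τ ^ 2)) := by
  continuity

lemma g_hasDeriv (s : ℝ) : HasDerivAt g (Real.sqrt (1 + 2 * s ^ 2)) s :=
  (cont_integrand.integral_hasStrictDerivAt 0 s).hasDerivAt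

lemma sqrt_pos' (s : ℝ) : 0 < Real.sqrt (1 + 2 * s ^ 2) :=
  Real.sqrt_pos.2 (by positivity)

lemma g_cont : Continuous g :=
  Differentiable.continuous (fun s => (g_hasDeriv s).differentiableAt)

lemma g_sm : StrictMono g :=
  strictMono_of_deriv_pos (fun s => by rw [(g_hasDeriv s).deriv]; exact sqrt_pos' s)

lemma g_neg (s : ℝ) : g (-s) = - g s := by
  have h := intervalIntegral.integral_comp_neg (a := (0:ℝ)) (b := s)
    (fun τ => Real.sqrt (1 + 2 * τ ^ 2))
  simp only [neg_zero, neg_sq] at h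
  unfold g
  rw [intervalIntegral.integral_symm, ← h]

lemma g_zero : g 0 = 0 := by simp [g]

lemma g_ge_self {s : ℝ} (hs : 0 ≤ s) : s ≤ g s := by
  have h1 : (∫ τ in (0:ℝ)..s, (1:ℝ)) ≤ g s := by
    apply intervalIntegral.integral_mono_on hs
    · exact intervalIntegrable_const
    · exact cont_integrand.intervalIntegrable 0 s
    · intro x _
      rw [show (1:ℝ) = Real.sqrt 1 by simp]
      apply Real.sqrt_le_sqrt
      nlinarith [sq_nonneg x, Real.sqrt_one]
  simpa using h1

lemma g_ge_sq {s : ℝ} (hs : 0 ≤ s) : s ^ 2 / Real.sqrt 2 ≤ g s := by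
  have h1 : (∫ τ in (0:ℝ)..s, Real.sqrt 2 * τ) ≤ g s := by
    apply intervalIntegral.integral_mono_on hs
    · exact (continuous_const.mul continuous_id).intervalIntegrable 0 s
    · exact cont_integrand.intervalIntegrable 0 s
    · intro x hx
      have hx0 : 0 ≤ x := hx.1
      have : Real.sqrt 2 * x = Real.sqrt (2 * x ^ 2) := by
        rw [Real.sqrt_mul (by norm_num), Real.sqrt_sq hx0]
      rw [this]
      apply Real.sqrt_le_sqrt
      nlinarith
  have h2 : (∫ τ in (0:ℝ)..s, Real.sqrt 2 * τ) = Real.sqrt 2 * (s ^ 2 / 2) := by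
    rw [intervalIntegral.integral_const_mul, integral_id]
    ring_nf
  rw [h2] at h1
  have h2pos : (0:ℝ) < Real.sqrt 2 := Real.sqrt_pos.2 (by norm_num)
  calc s ^ 2 / Real.sqrt 2 = s^2 / Real.sqrt 2 := rfl
    _ ≤ Real.sqrt 2 * (s ^ 2 / 2) := by
        rw [div_le_iff₀ h2pos]
        have : Real.sqrt 2 * Real.sqrt 2 = 2 := Real.mul_self_sqrt (by norm_num)
        nlinarith [sq_nonneg s]
    _ ≤ g s := h1

lemma g_surj : Function.Surjective g := by
  apply g_cont.surjective
  · apply Filter.tendsto_atTop_mono' _ _ Filter.tendsto_id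
    filter_upwards [Filter.eventually_ge_atTop (0:ℝ)] with s hs
    exact g_ge_self hs
  · apply Filter.tendsto_atBot_mono' _ _ Filter.tendsto_id
    filter_upwards [Filter.eventually_le_atBot (0:ℝ)] with s hs
    have : (-s : ℝ) ≤ g (-s) := g_ge_self (by linarith)
    rw [g_neg] at this
    simpa using this

lemma g_f (v : ℝ) : g (f v) = v := Function.rightInverse_invFun g_surj v
lemma f_g (s : ℝ) : f (g s) = s := Function.leftInverse_invFun g_sm.injective s
lemma f_zero : f 0 = 0 := by have := f_g 0; rwa [g_zero] at this

lemma f_sm : StrictMono f := by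
  intro a b hab
  rw [← g_sm.lt_iff_lt, g_f, g_f]
  exact hab

lemma f_surj : Function.Surjective f := fun s => ⟨g s, f_g s⟩

lemma f_cont : Continuous f := f_sm.monotone.continuous_of_surjective f_surj

lemma f_hasDeriv (v : ℝ) :
    HasDerivAt f (Real.sqrt (1 + 2 * (f v) ^ 2))⁻¹ v := by
  apply HasDerivAt.of_local_left_inverse f_cont.continuousAt (g_hasDeriv (f v))
    (ne_of_gt (sqrt_pos' _))
  exact Filter.Eventually.of_forall g_f

lemma f_neg (v : ℝ) : f (-v) = - f v := by
  have : g (- f v) = -v := by rw [g_neg, g_f]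
  rw [← this, f_g]

lemma f_abs_le (v : ℝ) : |f v| ≤ |v| := by
  rcases le_total 0 v with h | h
  · have h0 : 0 ≤ f v := by rw [← f_zero]; exact f_sm.monotone (by linarith)
    have : f v ≤ g (f v) := g_ge_self h0
    rw [g_f] at this
    rw [abs_of_nonneg h0, abs_of_nonneg h]
    exact this
  · have h0 : f v ≤ 0 := by rw [← f_zero]; exact f_sm.monotone (by linarith)
    have h1 : 0 ≤ f (-v) := by rw [← f_zero]; exact f_sm.monotone (by linarith)
    have : f (-v) ≤ g (f (-v)) := g_ge_self h1
    rw [g_f] at this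
    rw [abs_of_nonpos h0, abs_of_nonpos h, ← f_neg]
    exact this

lemma f_sq_le (v : ℝ) : (f v) ^ 2 ≤ Real.sqrt 2 * |v| := by
  have key : ∀ w : ℝ, 0 ≤ w → (f w) ^ 2 ≤ Real.sqrt 2 * |w| := by
    intro w hw
    have h0 : 0 ≤ f w := by rw [← f_zero]; exact f_sm.monotone hw
    have : (f w) ^ 2 / Real.sqrt 2 ≤ g (f w) := g_ge_sq h0
    rw [g_f] at this
    have h2 : (0:ℝ) < Real.sqrt 2 := Real.sqrt_pos.2 (by norm_num)
    rw [abs_of_nonneg hw]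
    calc (f w)^2 = ((f w)^2 / Real.sqrt 2) * Real.sqrt 2 := by field_simp
      _ ≤ w * Real.sqrt 2 := by nlinarith
      _ = Real.sqrt 2 * w := by ring
  rcases le_total 0 v with h | h
  · exact key v h
  · have := key (-v) (by linarith)
    rw [f_neg, abs_neg] at this
    simpa using this

lemma f_deriv (v : ℝ) : deriv f v = (Real.sqrt (1 + 2 * (f v) ^ 2))⁻¹ :=
  (f_hasDeriv v).deriv

lemma fd_pos (v : ℝ) : 0 < deriv f v := by
  rw [f_deriv]; exact inv_pos.2 (sqrt_pos' _)

lemma fd_le_one (v : ℝ) : deriv f v ≤ 1 := by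
  rw [f_deriv]
  rw [inv_le_one_iff₀]
  right
  rw [show (1:ℝ) = Real.sqrt 1 by simp]
  apply Real.sqrt_le_sqrt
  nlinarith [sq_nonneg (f v), Real.sqrt_one]

lemma f_mul_fd (v : ℝ) : |f v| * deriv f v ≤ (Real.sqrt 2)⁻¹ := by
  rw [f_deriv]
  have h2 : (0:ℝ) < Real.sqrt 2 := Real.sqrt_pos.2 (by norm_num)
  have hs : 0 < Real.sqrt (1 + 2 * (f v)^2) := sqrt_pos' _
  rw [mul_inv_le_iff₀ hs, inv_mul_eq_div, le_div_iff₀ h2]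
  have key : Real.sqrt 2 * |f v| = Real.sqrt (2 * (f v)^2) := by
    rw [Real.sqrt_mul (by norm_num), Real.sqrt_sq_eq_abs]
  calc |f v| * Real.sqrt 2 = Real.sqrt (2 * (f v)^2) := by rw [← key]; ring
    _ ≤ Real.sqrt (1 + 2 * (f v)^2) := Real.sqrt_le_sqrt (by nlinarith)

lemma sq_rpow_eq (y : ℝ) (r : ℝ) : ((y ^ 2 : ℝ)) ^ (r / 2) = |y| ^ r := by
  rw [← sq_abs, ← Real.rpow_natCast |y| 2, ← Real.rpow_mul (abs_nonneg y)]
  congr 1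
  push_cast
  ring


lemma Htilde_eq (p : ℝ) : Htilde p = fun v =>
    (1 / p) * ((f v ^ 2 : ℝ) ^ (p / 2)) + (1 / 12) * (f v) ^ (12:ℕ)
      - (2 / 3) * v ^ (6:ℕ) := by
  funext v
  unfold Htilde
  rw [sq_rpow_eq, (by decide : Even 12).pow_abs, (by decide : Even 6).pow_abs]

lemma Htilde_hasDeriv {p : ℝ} (hp : 2 < p) (v : ℝ) :
    HasDerivAt (Htilde p) (htilde p v) v := by
  rw [Htilde_eq]
  have hfd := f_hasDeriv v
  set d := (Real.sqrt (1 + 2 * (f v) ^ 2))⁻¹ with hd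
  have h1 : HasDerivAt (fun v => ((f v) ^ 2 : ℝ) ^ (p / 2))
      ((p/2) * ((f v)^2) ^ (p/2 - 1) * (2 * f v ^ 1 * d)) v := by
    have hle : (1:ℝ) ≤ p/2 := by linarith
    have := HasDerivAt.rpow_const (hfd.pow 2) (Or.inr hle)
    convert this using 1
    · rfl
    · simp only [Pi.pow_apply, Nat.cast_ofNat, Nat.reduceSub, pow_one]
      ring
  have h2 : HasDerivAt (fun v => (f v) ^ (12:ℕ)) (12 * f v ^ (11:ℕ) * d) v := hfd.pow 12
  have h3 : HasDerivAt (fun v : ℝ => v ^ (6:ℕ)) (6 * v ^ (5:ℕ)) v := by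
    simpa using hasDerivAt_pow 6 v
  have H := ((h1.const_mul (1/p:ℝ)).add (h2.const_mul (1/12:ℝ))).sub (h3.const_mul (2/3:ℝ))
  refine HasDerivAt.congr_deriv H ?_
  unfold htilde
  rw [f_deriv, ← hd]
  have e1 : ((f v)^2 : ℝ) ^ (p/2 - 1) = |f v| ^ (p - 2) := by
    rw [show p/2 - 1 = (p-2)/2 by ring, sq_rpow_eq]
  rw [e1, (by decide : Even 10).pow_abs, (by decide : Even 4).pow_abs]
  have hp0 : (p:ℝ) ≠ 0 := by linarith
  field_simp
  ring

lemma interp {α r β ε : ℝ} (hα : 0 ≤ α) (h1 : α < r) (h2 : r < β) (hε : 0 < ε) :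
    ∃ C : ℝ, 0 < C ∧ ∀ t : ℝ, 0 ≤ t → t ^ r ≤ ε * t ^ α + C * t ^ β := by
  set δ : ℝ := min 1 (ε ^ (1 / (r - α))) with hδdef
  have hεr : (0:ℝ) < ε ^ (1 / (r - α)) := Real.rpow_pos_of_pos hε _
  have hδpos : 0 < δ := lt_min one_pos hεr
  refine ⟨max 1 (δ ^ (r - β)), lt_of_lt_of_le one_pos (le_max_left _ _), ?_⟩
  intro t ht
  rcases eq_or_lt_of_le ht with rfl | htpos
  · rw [Real.zero_rpow (ne_of_gt (lt_of_le_of_lt hα h1))]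
    have hA : 0 ≤ (0:ℝ) ^ α := Real.rpow_nonneg le_rfl α
    have hB : 0 ≤ (0:ℝ) ^ β := Real.rpow_nonneg le_rfl β
    have hM : (0:ℝ) ≤ max 1 (δ ^ (r - β)) := le_trans zero_le_one (le_max_left _ _)
    nlinarith
  rcases le_total t δ with hc | hc
  · have key : t ^ r = t ^ α * t ^ (r - α) := by
      rw [← Real.rpow_add htpos]; ring_nf
    have hb : t ^ (r - α) ≤ ε := by
      calc t ^ (r - α) ≤ (ε ^ (1 / (r - α))) ^ (r - α) := by
            apply Real.rpow_le_rpow (le_of_lt htpos)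
              (le_trans hc (min_le_right _ _)) (by linarith)
        _ = ε := by
            rw [← Real.rpow_mul (le_of_lt hε), one_div,
              inv_mul_cancel₀ (by intro h; linarith [h] : r - α ≠ 0), Real.rpow_one]
    calc t ^ r = t ^ α * t ^ (r - α) := key
      _ ≤ t ^ α * ε := by
          apply mul_le_mul_of_nonneg_left hb (Real.rpow_nonneg ht α)
      _ = ε * t ^ α := by ring
      _ ≤ ε * t ^ α + max 1 (δ ^ (r - β)) * t ^ β := by
          have : 0 ≤ max 1 (δ ^ (r - β)) * t ^ β :=
            mul_nonneg (le_trans zero_le_one (le_max_left _ _)) (Real.rpow_nonneg ht β)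
          linarith
  · have key : t ^ r = t ^ β * t ^ (r - β) := by
      rw [← Real.rpow_add htpos]; ring_nf
    have hb : t ^ (r - β) ≤ δ ^ (r - β) :=
      Real.rpow_le_rpow_of_nonpos hδpos hc (by linarith)
    calc t ^ r = t ^ β * t ^ (r - β) := key
      _ ≤ t ^ β * δ ^ (r - β) := by
          apply mul_le_mul_of_nonneg_left hb (Real.rpow_nonneg ht β)
      _ ≤ max 1 (δ ^ (r - β)) * t ^ β := by
          rw [mul_comm]
          apply mul_le_mul_of_nonneg_right (le_max_right _ _) (Real.rpow_nonneg ht β)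
      _ ≤ ε * t ^ α + max 1 (δ ^ (r - β)) * t ^ β := by
          have : 0 ≤ ε * t ^ α := mul_nonneg hε.le (Real.rpow_nonneg ht α)
          linarith

lemma sqrt2_pos : (0:ℝ) < Real.sqrt 2 := Real.sqrt_pos.2 (by norm_num)
lemma sqrt2_sq : Real.sqrt 2 ^ (2:ℕ) = 2 := Real.sq_sqrt (by norm_num)
lemma sqrt2_pow4 : Real.sqrt 2 ^ (4:ℕ) = 4 := by
  calc Real.sqrt 2 ^ (4:ℕ) = (Real.sqrt 2 ^ (2:ℕ)) ^ (2:ℕ) := by ring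
    _ = 4 := by rw [sqrt2_sq]; norm_num
lemma sqrt2_pow6 : Real.sqrt 2 ^ (6:ℕ) = 8 := by
  calc Real.sqrt 2 ^ (6:ℕ) = (Real.sqrt 2 ^ (2:ℕ)) ^ (3:ℕ) := by ring
    _ = 8 := by rw [sqrt2_sq]; norm_num

lemma part1 {p : ℝ} (hp : 2 < p) (hp' : p < 10/3) :
    ∀ ε : ℝ, 0 < ε → ∃ C : ℝ, 0 < C ∧ ∀ s : ℝ,
      |htilde p s| ≤ 2 * ε * |s| + 6 * C * |s| ^ (5:ℕ)
        ∧ |Htilde p s| ≤ ε * s ^ 2 + C * |s| ^ (6:ℕ) := by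
  intro ε hε
  obtain ⟨C1, hC1, hI1⟩ := interp (α := 1) (r := p - 1) (β := 5)
    (by norm_num) (by linarith) (by linarith) hε
  obtain ⟨C2, hC2, hI2⟩ := interp (α := 2) (r := p) (β := 6)
    (by norm_num) (by linarith) (by linarith) hε
  refine ⟨C1 + C2 + 8, by positivity, fun s => ?_⟩
  have ha0 : 0 ≤ |f s| := abs_nonneg _
  have hs0 : 0 ≤ |s| := abs_nonneg _
  have hfa : |f s| ≤ |s| := f_abs_le s
  have hf2 : |f s| ^ (2:ℕ) ≤ Real.sqrt 2 * |s| := by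
    rw [sq_abs]; exact f_sq_le s
  have hd0 : 0 < deriv f s := fd_pos s
  have hd1 : deriv f s ≤ 1 := fd_le_one s
  have hmd : |f s| * deriv f s ≤ (Real.sqrt 2)⁻¹ := f_mul_fd s
  have hpr : |f s| ^ (p-2) * |f s| ≤ |s| ^ (p-1) := by
    rcases eq_or_lt_of_le ha0 with h0 | h0
    · rw [← h0, Real.zero_rpow (by intro h; linarith), mul_zero]
      exact Real.rpow_nonneg hs0 _
    · have e : |f s| ^ (p-2) * |f s| = |f s| ^ (p-1) := by
        rw [show p - 1 = (p-2) + 1 by ring, Real.rpow_add_one (ne_of_gt h0)]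
      rw [e]
      exact Real.rpow_le_rpow ha0 hfa (by linarith)
  have hA : |(|f s| ^ (p-2) * f s * deriv f s)| ≤ |s| ^ (p-1) := by
    rw [abs_mul, abs_mul, abs_of_nonneg (Real.rpow_nonneg ha0 _),
      abs_of_nonneg hd0.le]
    calc |f s| ^ (p-2) * |f s| * deriv f s ≤ |f s| ^ (p-2) * |f s| * 1 :=
          mul_le_mul_of_nonneg_left hd1 (mul_nonneg (Real.rpow_nonneg ha0 _) ha0)
      _ = |f s| ^ (p-2) * |f s| := by ring
      _ ≤ |s| ^ (p-1) := hpr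
  have hB : |(|f s| ^ (10:ℕ) * f s * deriv f s)| ≤ 4 * |s| ^ (5:ℕ) := by
    have hb1 : |f s| ^ (10:ℕ) ≤ (Real.sqrt 2 * |s|) ^ (5:ℕ) := by
      calc |f s| ^ (10:ℕ) = (|f s| ^ (2:ℕ)) ^ (5:ℕ) := by ring
        _ ≤ (Real.sqrt 2 * |s|) ^ (5:ℕ) :=
            pow_le_pow_left₀ (pow_nonneg ha0 2) hf2 5
    calc |(|f s| ^ (10:ℕ) * f s * deriv f s)|
        = |f s| ^ (10:ℕ) * (|f s| * deriv f s) := by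
          rw [abs_mul, abs_mul, abs_of_nonneg (pow_nonneg ha0 10),
            abs_of_nonneg hd0.le]
          ring
      _ ≤ (Real.sqrt 2 * |s|) ^ (5:ℕ) * (Real.sqrt 2)⁻¹ := by
          apply mul_le_mul hb1 hmd (mul_nonneg ha0 hd0.le) (by positivity)
      _ = 4 * |s| ^ (5:ℕ) := by
          rw [mul_pow,
            show (Real.sqrt 2:ℝ) ^ (5:ℕ) = Real.sqrt 2 ^ (4:ℕ) * Real.sqrt 2 by ring,
            sqrt2_pow4]
          field_simp
  have h3rd : |4 * |s| ^ (4:ℕ) * s| = 4 * |s| ^ (5:ℕ) := by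
    rw [abs_mul, abs_mul]
    simp [abs_abs]
    ring
  have hI1' : |s| ^ (p-1) ≤ ε * |s| + C1 * |s| ^ (5:ℕ) := by
    have h := hI1 |s| hs0
    rwa [Real.rpow_one, show ((5:ℝ)) = ((5:ℕ):ℝ) by norm_num,
      Real.rpow_natCast] at h
  have hnn : 0 ≤ ε * |s| := mul_nonneg hε.le hs0
  have hnn5 : 0 ≤ |s| ^ (5:ℕ) := pow_nonneg hs0 5
  have hnn6 : 0 ≤ |s| ^ (6:ℕ) := pow_nonneg hs0 6
  constructor
  · have t1 := abs_add_le (|f s| ^ (p-2) * f s * deriv f s)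
      (|f s| ^ (10:ℕ) * f s * deriv f s)
    have t2 := abs_sub (|f s| ^ (p-2) * f s * deriv f s
      + |f s| ^ (10:ℕ) * f s * deriv f s) (4 * |s| ^ (4:ℕ) * s)
    have htri : |htilde p s| ≤ |(|f s| ^ (p-2) * f s * deriv f s)|
        + |(|f s| ^ (10:ℕ) * f s * deriv f s)| + (4 * |s| ^ (5:ℕ)) := by
      unfold htilde
      rw [h3rd] at t2
      linarith
    nlinarith [mul_nonneg hC1.le hnn5, mul_nonneg hC2.le hnn5]
  · have hap : |f s| ^ p ≤ |s| ^ p := Real.rpow_le_rpow ha0 hfa (by linarith)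
    have hI2' : |s| ^ p ≤ ε * s ^ 2 + C2 * |s| ^ (6:ℕ) := by
      have h := hI2 |s| hs0
      rwa [show ((2:ℝ)) = ((2:ℕ):ℝ) by norm_num, Real.rpow_natCast,
        show ((6:ℝ)) = ((6:ℕ):ℝ) by norm_num, Real.rpow_natCast, sq_abs] at h
    have h12 : |f s| ^ (12:ℕ) ≤ 8 * |s| ^ (6:ℕ) := by
      calc |f s| ^ (12:ℕ) = (|f s| ^ (2:ℕ)) ^ (6:ℕ) := by ring
        _ ≤ (Real.sqrt 2 * |s|) ^ (6:ℕ) := pow_le_pow_left₀ (pow_nonneg ha0 2) hf2 6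
        _ = 8 * |s| ^ (6:ℕ) := by rw [mul_pow, sqrt2_pow6]
    have e1 : 0 ≤ (1/p) * |f s| ^ p :=
      mul_nonneg (by positivity) (Real.rpow_nonneg ha0 _)
    have e2 : 0 ≤ (1/12) * |f s| ^ (12:ℕ) :=
      mul_nonneg (by norm_num) (pow_nonneg ha0 12)
    have e3 : 0 ≤ (2/3) * |s| ^ (6:ℕ) := mul_nonneg (by norm_num) hnn6
    have htri : |Htilde p s| ≤ (1/p) * |f s| ^ p + (1/12) * |f s| ^ (12:ℕ)
        + (2/3) * |s| ^ (6:ℕ) := by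
      unfold Htilde
      rw [abs_le]
      constructor <;> linarith
    have hfp0 : 0 ≤ |f s| ^ p := Real.rpow_nonneg ha0 _
    have hpinv : (1:ℝ)/p ≤ 1/2 := one_div_le_one_div_of_le (by norm_num) hp.le
    have hp2 : (1/p) * |f s| ^ p ≤ |f s| ^ p := by
      nlinarith [mul_nonneg hfp0 (by linarith : (0:ℝ) ≤ 1 - 1/p)]
    have hnn2 : 0 ≤ ε * s ^ 2 := mul_nonneg hε.le (sq_nonneg s)
    nlinarith [mul_nonneg hC1.le hnn6]

lemma young_pow (n : ℕ) {θ a b : ℝ} (hθ : 0 < θ) (ha : 0 ≤ a) (hb : 0 ≤ b) :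
    a ^ n * b ≤ θ * a ^ (n+1) + θ⁻¹ ^ n * b ^ (n+1) := by
  have hθi : 0 ≤ θ⁻¹ ^ n * b ^ (n+1) :=
    mul_nonneg (pow_nonneg (inv_nonneg.2 hθ.le) n) (pow_nonneg hb _)
  have hθa : 0 ≤ θ * a ^ (n+1) := mul_nonneg hθ.le (pow_nonneg ha _)
  rcases le_or_gt b (θ * a) with h | h
  · calc a ^ n * b ≤ a ^ n * (θ * a) :=
        mul_le_mul_of_nonneg_left h (pow_nonneg ha n)
      _ = θ * a ^ (n+1) := by ring
      _ ≤ _ := by linarith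
  · have hab : a ≤ θ⁻¹ * b := by
      rw [← inv_mul_cancel_left₀ (ne_of_gt hθ) a]
      exact mul_le_mul_of_nonneg_left h.le (inv_nonneg.2 hθ.le)
    calc a ^ n * b ≤ (θ⁻¹ * b) ^ n * b :=
        mul_le_mul_of_nonneg_right (pow_le_pow_left₀ ha hab n) hb
      _ = θ⁻¹ ^ n * b ^ (n+1) := by ring
      _ ≤ _ := by linarith

lemma add_pow_five {a b : ℝ} (ha : 0 ≤ a) (hb : 0 ≤ b) :
    (a + b) ^ (5:ℕ) ≤ 32 * (a ^ (5:ℕ) + b ^ (5:ℕ)) := by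
  rcases le_total a b with h | h
  · calc (a + b) ^ (5:ℕ) ≤ (2 * b) ^ (5:ℕ) :=
        pow_le_pow_left₀ (by linarith) (by linarith) 5
      _ = 32 * b ^ (5:ℕ) := by ring
      _ ≤ _ := by nlinarith [pow_nonneg ha 5]
  · calc (a + b) ^ (5:ℕ) ≤ (2 * a) ^ (5:ℕ) :=
        pow_le_pow_left₀ (by linarith) (by linarith) 5
      _ = 32 * a ^ (5:ℕ) := by ring
      _ ≤ _ := by nlinarith [pow_nonneg hb 5]

lemma mvt {p : ℝ} (hp : 2 < p) (w u : ℝ) :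
    ∃ c : ℝ, |c| ≤ |w| + |u| ∧
      Htilde p (w + u) - Htilde p w = htilde p c * u := by
  have hdiff : ∀ x : ℝ, HasDerivAt (Htilde p) (htilde p x) x := Htilde_hasDeriv hp
  have hcontH : Continuous (Htilde p) :=
    Differentiable.continuous (fun x => (hdiff x).differentiableAt)
  rcases lt_trichotomy u 0 with hu | hu | hu
  · obtain ⟨c, hc, hslope⟩ := exists_hasDerivAt_eq_slope (Htilde p) (htilde p)
      (by linarith : w + u < w) hcontH.continuousOn (fun x _ => hdiff x)
    refine ⟨c, ?_, ?_⟩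
    · rw [abs_le]
      constructor
      · have := hc.1
        have h1 : -(|w| + |u|) ≤ w + u := by
          have := neg_abs_le w; have := neg_abs_le u; linarith
        linarith
      · have := hc.2
        have h2 : w ≤ |w| := le_abs_self w
        have : 0 ≤ |u| := abs_nonneg u
        linarith
    · have hune : u ≠ 0 := ne_of_lt hu
      rw [hslope, show w - (w + u) = -u by ring, div_neg, neg_mul,
        div_mul_cancel₀ _ hune]
      ring
  · exact ⟨w, by simp [hu, le_abs_self, abs_nonneg, le_add_of_nonneg_right], by
      simp [hu]⟩
  · obtain ⟨c, hc, hslope⟩ := exists_hasDerivAt_eq_slope (Htilde p) (htilde p)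
      (by linarith : w < w + u) hcontH.continuousOn (fun x _ => hdiff x)
    refine ⟨c, ?_, ?_⟩
    · rw [abs_le]
      constructor
      · have := hc.1
        have h1 : -(|w| + |u|) ≤ w := by
          have := neg_abs_le w; have : 0 ≤ |u| := abs_nonneg u; linarith
        linarith
      · have := hc.2
        have h2 : w + u ≤ |w| + |u| := add_le_add (le_abs_self w) (le_abs_self u)
        linarith
    · have hune : u ≠ 0 := ne_of_gt hu
      rw [hslope, show w + u - w = u by ring, div_mul_cancel₀ _ hune]

lemma part2 {p : ℝ} (hp : 2 < p) (hp' : p < 10/3) :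
    ∀ ε : ℝ, 0 < ε → ∃ C : ℝ, 0 < C ∧ ∀ w u : ℝ,
      |Htilde p (w + u) - Htilde p w - Htilde p u|
        ≤ ε * (|w| ^ 2 + |w| ^ (6:ℕ)) + C * (|u| ^ 2 + |u| ^ (6:ℕ)) := by
  intro ε hε
  obtain ⟨C1, hC1, hP1⟩ := part1 hp hp' (ε/4) (by positivity)
  obtain ⟨C0, hC0, hP0⟩ := part1 hp hp' 1 one_pos
  set θ : ℝ := ε / (192 * C1) with hθdef
  have hθ : 0 < θ := by positivity
  refine ⟨ε + 1 + C0 + 192 * C1 + 192 * C1 * θ⁻¹ ^ (5:ℕ), by positivity, fun w u => ?_⟩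
  obtain ⟨c, hcb, heq⟩ := mvt hp w u
  have hw0 : (0:ℝ) ≤ |w| := abs_nonneg w
  have hu0 : (0:ℝ) ≤ |u| := abs_nonneg u
  have hc0 : (0:ℝ) ≤ |c| := abs_nonneg c
  -- triangle
  have h1 : |Htilde p (w + u) - Htilde p w - Htilde p u|
      ≤ |htilde p c| * |u| + |Htilde p u| := by
    have e : Htilde p (w + u) - Htilde p w - Htilde p u
        = htilde p c * u - Htilde p u := by linarith
    rw [e]
    calc |htilde p c * u - Htilde p u| ≤ |htilde p c * u| + |Htilde p u| :=
          abs_sub _ _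
      _ = |htilde p c| * |u| + |Htilde p u| := by rw [abs_mul]
  have h2 : |htilde p c| ≤ 2 * (ε/4) * |c| + 6 * C1 * |c| ^ (5:ℕ) := (hP1 c).1
  have hHu : |Htilde p u| ≤ 1 * u ^ 2 + C0 * |u| ^ (6:ℕ) := (hP0 u).2
  have h4 : |c| ^ (5:ℕ) ≤ 32 * (|w| ^ (5:ℕ) + |u| ^ (5:ℕ)) := by
    calc |c| ^ (5:ℕ) ≤ (|w| + |u|) ^ (5:ℕ) := pow_le_pow_left₀ hc0 hcb 5
      _ ≤ 32 * (|w| ^ (5:ℕ) + |u| ^ (5:ℕ)) := add_pow_five hw0 hu0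
  -- bound |htilde p c| * |u|
  have m0 : |htilde p c| * |u| ≤ (2 * (ε/4) * |c| + 6 * C1 * |c| ^ (5:ℕ)) * |u| :=
    mul_le_mul_of_nonneg_right h2 hu0
  have m1 : 2 * (ε/4) * |c| * |u| ≤ 2 * (ε/4) * (|w| + |u|) * |u| :=
    mul_le_mul_of_nonneg_right
      (mul_le_mul_of_nonneg_left hcb (by positivity)) hu0
  have m2 : 6 * C1 * |c| ^ (5:ℕ) * |u|
      ≤ 6 * C1 * (32 * (|w| ^ (5:ℕ) + |u| ^ (5:ℕ))) * |u| :=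
    mul_le_mul_of_nonneg_right
      (mul_le_mul_of_nonneg_left h4 (by positivity)) hu0
  have h5 : |htilde p c| * |u| ≤ (ε/2) * (|w| * |u|) + (ε/2) * (|u| * |u|)
      + 192 * C1 * (|w| ^ (5:ℕ) * |u|) + 192 * C1 * (|u| ^ (5:ℕ) * |u|) := by
    nlinarith [m0, m1, m2]
  -- Young
  have h6 : |w| * |u| ≤ |w| ^ 2 + |u| ^ 2 := by
    nlinarith [sq_nonneg (|w| - |u|)]
  have h7 : |w| ^ (5:ℕ) * |u| ≤ θ * |w| ^ (6:ℕ) + θ⁻¹ ^ (5:ℕ) * |u| ^ (6:ℕ) :=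
    young_pow 5 hθ hw0 hu0
  have hθC : 192 * C1 * θ = ε := by
    rw [hθdef]; field_simp
  have h6' : (ε/2) * (|w| * |u|) ≤ (ε/2) * (|w| ^ 2 + |u| ^ 2) :=
    mul_le_mul_of_nonneg_left h6 (by positivity)
  have h7'' : 192 * C1 * (|w| ^ (5:ℕ) * |u|)
      ≤ ε * |w| ^ (6:ℕ) + 192 * C1 * θ⁻¹ ^ (5:ℕ) * |u| ^ (6:ℕ) := by
    calc 192 * C1 * (|w| ^ (5:ℕ) * |u|)
        ≤ 192 * C1 * (θ * |w| ^ (6:ℕ) + θ⁻¹ ^ (5:ℕ) * |u| ^ (6:ℕ)) :=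
          mul_le_mul_of_nonneg_left h7 (by positivity)
      _ = ε * |w| ^ (6:ℕ) + 192 * C1 * θ⁻¹ ^ (5:ℕ) * |u| ^ (6:ℕ) := by
          rw [← hθC]; ring
  have hHu' : |Htilde p u| ≤ 1 * |u| ^ 2 + C0 * |u| ^ (6:ℕ) := by
    rw [sq_abs]; exact hHu
  have n1 : (0:ℝ) ≤ |w| ^ 2 := sq_nonneg _
  have n2 : (0:ℝ) ≤ |u| ^ 2 := sq_nonneg _
  have n3 : (0:ℝ) ≤ |w| ^ (6:ℕ) := pow_nonneg hw0 6
  have n4 : (0:ℝ) ≤ |u| ^ (6:ℕ) := pow_nonneg hu0 6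
  have nK : (0:ℝ) ≤ 192 * C1 * θ⁻¹ ^ (5:ℕ) := by positivity
  linarith [h1, h5, h6', h7'', hHu',
    mul_nonneg hε.le n1, mul_nonneg hε.le n4,
    mul_nonneg hC0.le n2, mul_nonneg hC1.le n2, mul_nonneg nK n2, n4]

/-- Growth estimates for `h̃` and `H̃`, and the Brezis–Lieb-type pointwise
estimate for `H̃`. -/
theorem stmt_9 (p : ℝ) (hp : 2 < p) (hp' : p < 10 / 3) :
    (∀ ε : ℝ, 0 < ε → ∃ C : ℝ, 0 < C ∧ ∀ s : ℝ,
      |htilde p s| ≤ 2 * ε * |s| + 6 * C * |s| ^ (5:ℕ)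
        ∧ |Htilde p s| ≤ ε * s ^ 2 + C * |s| ^ (6:ℕ))
    ∧ (∀ ε : ℝ, 0 < ε → ∃ C : ℝ, 0 < C ∧ ∀ w u : ℝ,
      |Htilde p (w + u) - Htilde p w - Htilde p u|
        ≤ ε * (|w| ^ 2 + |w| ^ (6:ℕ)) + C * (|u| ^ 2 + |u| ^ (6:ℕ))) :=
  ⟨part1 hp hp', part2 hp hp'⟩
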